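/- arXiv:2603.24605 — 5 statements merged into one kernel-verified Lean document; each statement's English description precedes it below -/
import Mathlib

section
/- The directed bid–ask distance d⃗ is nonnegative, satisfies the triangle inequality d⃗(μ,ρ) ≤ d⃗(μ,ν) + d⃗(ν,ρ), and separates points: if d⃗(μ,ν) = d⃗(ν,μ) = 0 then μ = ν. Consequently, the symmetrization d(μ,ν) = (d⃗(μ,ν) + d⃗(ν,μ))/2 is a metric on P₁(ℝ₊). -/
open MeasureTheory Set Filter Topology
open scoped NNReal ENNReal

noncomputable section

/-- Linear growth on the nonnegative half-line. -/
def LinGrowth (f : ℝ → ℝ) : Prop := ∃ C : ℝ, ∀ x ≥ (0:ℝ), |f x| ≤ C * (1 + x)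

/-- A probability measure on ℝ supported on ℝ₊ with finite first moment. -/
def IsP1 (μ : Measure ℝ) : Prop :=
  IsProbabilityMeasure μ ∧ (∀ᵐ x ∂μ, 0 ≤ x) ∧ Integrable id μ

/-- Convex order: integrals of convex linear-growth test functions are ordered. -/
def CvxOrder (μ ν : Measure ℝ) : Prop :=
  ∀ ψ : ℝ → ℝ, ConvexOn ℝ (Ici (0:ℝ)) ψ → LinGrowth ψ →
    ∫ x, ψ x ∂μ ≤ ∫ x, ψ x ∂ν

/-- The directed bid–ask distance. -/
def dirDist (μ ν : Measure ℝ) : ℝ :=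
  sSup {r : ℝ | ∃ ψ : ℝ → ℝ, ConvexOn ℝ (Ici (0:ℝ)) ψ ∧
    LipschitzOnWith 1 ψ (Ici (0:ℝ)) ∧ r = ∫ x, ψ x ∂μ - ∫ x, ψ x ∂ν}

/-- The (symmetrized) bid–ask distance. -/
def baDist (μ ν : Measure ℝ) : ℝ := (dirDist μ ν + dirDist ν μ) / 2

/-!
`dirDist μ ν` is a supremum of gaps `μ(ψ) - ν(ψ)` over a class of test functions containing `0`,
which gives nonnegativity and the triangle inequality; it is finite because
`|μ(ψ) - ψ 0| ≤ ∫ x dμ` for `1`-Lipschitz `ψ`. The call payoffs `(x - t)⁺` are convex and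
`1`-Lipschitz, so `dirDist μ ν = dirDist ν μ = 0` forces equal call prices `C(t)` at every strike,
and the slopes `(C(t - h) - C(t)) / h` tend to `μ [t, ∞)` as `h ↓ 0`: the two measures have the same
upper tails.
-/

lemma LipschitzOnWith.abs_sub_apply_zero_le {ψ : ℝ → ℝ} {K : ℝ≥0}
    (hψ : LipschitzOnWith K ψ (Ici 0)) {x : ℝ} (hx : 0 ≤ x) : |ψ x - ψ 0| ≤ K * x := by
  simpa [Real.dist_eq, abs_of_nonneg hx] using hψ.dist_le_mul x hx 0 self_mem_Ici

namespace IsP1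

variable {μ : Measure ℝ} {ψ : ℝ → ℝ} {K : ℝ≥0}

lemma integrable_of_lipschitzOnWith (hμ : IsP1 μ) (hψ : LipschitzOnWith K ψ (Ici 0)) :
    Integrable ψ μ := by
  have := hμ.1
  have hsupp : ∀ᵐ x ∂μ, x ∈ Ici (0 : ℝ) := hμ.2.1
  have hmeas : AEStronglyMeasurable ψ μ := by
    rw [← Measure.restrict_eq_self_of_ae_mem hsupp]
    exact hψ.continuousOn.aestronglyMeasurable measurableSet_Ici
  refine Integrable.mono' ((integrable_const |ψ 0|).add (hμ.2.2.const_mul K)) hmeas ?_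
  filter_upwards [hsupp] with x hx
  simp only [Real.norm_eq_abs, Pi.add_apply, id]
  linarith [abs_sub_abs_le_abs_sub (ψ x) (ψ 0), hψ.abs_sub_apply_zero_le hx]

lemma abs_integral_sub_apply_zero_le (hμ : IsP1 μ) (hψ : LipschitzOnWith K ψ (Ici 0)) :
    |∫ x, ψ x ∂μ - ψ 0| ≤ K * ∫ x, x ∂μ := by
  have := hμ.1
  have hint : ∫ x, ψ x ∂μ - ψ 0 = ∫ x, (ψ x - ψ 0) ∂μ := by
    rw [integral_sub (hμ.integrable_of_lipschitzOnWith hψ) (integrable_const _)]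
    simp
  rw [hint, ← integral_const_mul]
  refine norm_integral_le_of_norm_le (G := ℝ) (hμ.2.2.const_mul K) ?_
  filter_upwards [hμ.2.1] with x hx
  exact hψ.abs_sub_apply_zero_le hx

end IsP1

section dirDist

variable {μ ν ρ : Measure ℝ} {ψ : ℝ → ℝ}

lemma integral_sub_integral_le_dirDist (hμ : IsP1 μ) (hν : IsP1 ν)
    (hconv : ConvexOn ℝ (Ici 0) ψ) (hlip : LipschitzOnWith 1 ψ (Ici 0)) :
    ∫ x, ψ x ∂μ - ∫ x, ψ x ∂ν ≤ dirDist μ ν := by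
  refine le_csSup ⟨∫ x, x ∂μ + ∫ x, x ∂ν, ?_⟩ ⟨ψ, hconv, hlip, rfl⟩
  rintro _ ⟨φ, -, hφ, rfl⟩
  have hμφ := abs_le.mp (hμ.abs_integral_sub_apply_zero_le hφ)
  have hνφ := abs_le.mp (hν.abs_integral_sub_apply_zero_le hφ)
  simp only [NNReal.coe_one, one_mul] at hμφ hνφ
  linarith [hμφ.2, hνφ.1]

lemma dirDist_le {c : ℝ}
    (h : ∀ ψ : ℝ → ℝ, ConvexOn ℝ (Ici 0) ψ → LipschitzOnWith 1 ψ (Ici 0) →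
      ∫ x, ψ x ∂μ - ∫ x, ψ x ∂ν ≤ c) :
    dirDist μ ν ≤ c :=
  csSup_le ⟨0, fun _ => 0, convexOn_const 0 (convex_Ici 0),
    (LipschitzWith.const' 0).lipschitzOnWith, by simp⟩
    fun _ ⟨ψ, hconv, hlip, hr⟩ => hr ▸ h ψ hconv hlip

lemma dirDist_nonneg (hμ : IsP1 μ) (hν : IsP1 ν) : 0 ≤ dirDist μ ν := by
  simpa using integral_sub_integral_le_dirDist hμ hν (convexOn_const 0 (convex_Ici 0))
    (LipschitzWith.const' 0).lipschitzOnWith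

lemma dirDist_self (hμ : IsP1 μ) : dirDist μ μ = 0 :=
  le_antisymm (dirDist_le fun _ _ _ => (sub_self _).le) (dirDist_nonneg hμ hμ)

lemma dirDist_triangle (hμ : IsP1 μ) (hν : IsP1 ν) (hρ : IsP1 ρ) :
    dirDist μ ρ ≤ dirDist μ ν + dirDist ν ρ :=
  dirDist_le fun ψ hconv hlip => by
    linarith [integral_sub_integral_le_dirDist hμ hν hconv hlip,
      integral_sub_integral_le_dirDist hν hρ hconv hlip]

end dirDist

def callPayoff (t x : ℝ) : ℝ := max (x - t) 0

lemma convexOn_callPayoff (t : ℝ) : ConvexOn ℝ univ (callPayoff t) :=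
  ((convexOn_id convex_univ).sub (concaveOn_const t convex_univ)).sup
    (convexOn_const 0 convex_univ)

lemma lipschitzWith_callPayoff (t : ℝ) : LipschitzWith 1 (callPayoff t) :=
  (IsometryEquiv.subRight t).isometry.lipschitz.max_const 0

lemma continuous_callPayoff (t : ℝ) : Continuous (callPayoff t) :=
  (lipschitzWith_callPayoff t).continuous

lemma callPayoff_sub_callPayoff_mem_Icc {t h : ℝ} (hh : 0 ≤ h) (x : ℝ) :
    callPayoff (t - h) x - callPayoff t x ∈ Icc 0 h := by
  unfold callPayoff
  constructor <;> cases max_cases (x - (t - h)) 0 <;> cases max_cases (x - t) 0 <;> linarith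

lemma tendsto_callPayoff_slope (t x : ℝ) :
    Tendsto (fun h => (callPayoff (t - h) x - callPayoff t x) / h) (𝓝[>] 0)
      (𝓝 ((Ici t).indicator 1 x)) := by
  rcases le_or_gt t x with hx | hx
  · rw [indicator_of_mem (mem_Ici.2 hx)]
    refine tendsto_const_nhds.congr' (eventually_nhdsWithin_of_forall fun h (hh : 0 < h) => ?_)
    simp [callPayoff, max_eq_left (sub_nonneg.2 hx), max_eq_left (by linarith : 0 ≤ x - (t - h)),
      hh.ne']
  · rw [indicator_of_notMem (notMem_Ici.2 hx)]
    refine tendsto_const_nhds.congr' ?_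
    filter_upwards [Ioo_mem_nhdsGT (sub_pos.2 hx)] with h hh
    simp [callPayoff, max_eq_right (by linarith [hh.2] : x - (t - h) ≤ 0),
      max_eq_right (sub_nonpos.2 hx.le)]

lemma tendsto_integral_callPayoff_slope (μ : Measure ℝ) [IsFiniteMeasure μ] (t : ℝ) :
    Tendsto (fun h => ∫ x, (callPayoff (t - h) x - callPayoff t x) / h ∂μ) (𝓝[>] 0)
      (𝓝 (μ.real (Ici t))) := by
  have hlim := tendsto_integral_filter_of_dominated_convergence (μ := μ)
    (F := fun h x => (callPayoff (t - h) x - callPayoff t x) / h) (fun _ => 1)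
    (Eventually.of_forall fun h =>
      (((continuous_callPayoff _).sub (continuous_callPayoff t)).div_const h).aestronglyMeasurable)
    ?_ (integrable_const 1) (Eventually.of_forall (tendsto_callPayoff_slope t))
  · rwa [integral_indicator_one measurableSet_Ici] at hlim
  filter_upwards [self_mem_nhdsWithin] with h (hh : 0 < h)
  refine Eventually.of_forall fun x => ?_
  obtain ⟨h₀, h₁⟩ := callPayoff_sub_callPayoff_mem_Icc (t := t) hh.le x
  rw [Real.norm_eq_abs, abs_of_nonneg (div_nonneg h₀ hh.le), div_le_one hh]
  exact h₁

lemma ext_of_integral_callPayoff_eq {μ ν : Measure ℝ} [IsFiniteMeasure μ] [IsFiniteMeasure ν]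
    (hμ : ∀ t, Integrable (callPayoff t) μ) (hν : ∀ t, Integrable (callPayoff t) ν)
    (h : ∀ t, ∫ x, callPayoff t x ∂μ = ∫ x, callPayoff t x ∂ν) : μ = ν := by
  refine Measure.ext_of_Ici μ ν fun t => ?_
  have hslope : ∀ κ : Measure ℝ, (∀ t, Integrable (callPayoff t) κ) → ∀ h : ℝ,
      ∫ x, (callPayoff (t - h) x - callPayoff t x) / h ∂κ =
        (∫ x, callPayoff (t - h) x ∂κ - ∫ x, callPayoff t x ∂κ) / h := fun κ hκ h => by
    rw [integral_div, integral_sub (hκ _) (hκ _)]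
  have hreal : μ.real (Ici t) = ν.real (Ici t) := by
    refine tendsto_nhds_unique (tendsto_integral_callPayoff_slope μ t) ?_
    simpa only [hslope μ hμ, hslope ν hν, h] using tendsto_integral_callPayoff_slope ν t
  exact (measureReal_eq_measureReal_iff (measure_ne_top μ _) (measure_ne_top ν _)).1 hreal

lemma eq_of_dirDist_eq_zero {μ ν : Measure ℝ} (hμ : IsP1 μ) (hν : IsP1 ν)
    (hμν : dirDist μ ν = 0) (hνμ : dirDist ν μ = 0) : μ = ν := by
  have := hμ.1
  have := hν.1
  have hconv t := (convexOn_callPayoff t).subset (subset_univ (Ici 0)) (convex_Ici 0)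
  have hlip t := (lipschitzWith_callPayoff t).lipschitzOnWith (s := Ici 0)
  refine ext_of_integral_callPayoff_eq (fun t => hμ.integrable_of_lipschitzOnWith (hlip t))
    (fun t => hν.integrable_of_lipschitzOnWith (hlip t)) fun t => ?_
  linarith [integral_sub_integral_le_dirDist hμ hν (hconv t) (hlip t),
    integral_sub_integral_le_dirDist hν hμ (hconv t) (hlip t)]

/-- `dirDist` is an asymmetric distance and `baDist` is a metric. -/
theorem dirDist_asymmetric_distance (μ ν ρ : Measure ℝ)
    (hμ : IsP1 μ) (hν : IsP1 ν) (hρ : IsP1 ρ) :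
    0 ≤ dirDist μ ν ∧
    dirDist μ ρ ≤ dirDist μ ν + dirDist ν ρ ∧
    (dirDist μ ν = 0 → dirDist ν μ = 0 → μ = ν) ∧
    0 ≤ baDist μ ν ∧
    baDist μ ν = baDist ν μ ∧
    (baDist μ ν = 0 ↔ μ = ν) ∧
    baDist μ ρ ≤ baDist μ ν + baDist ν ρ := by
  have hμν := dirDist_nonneg hμ hν
  have hνμ := dirDist_nonneg hν hμ
  refine ⟨hμν, dirDist_triangle hμ hν hρ, eq_of_dirDist_eq_zero hμ hν, ?_, ?_, ?_, ?_⟩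
  · unfold baDist; linarith
  · unfold baDist; ring
  · refine ⟨fun h => ?_, ?_⟩
    · unfold baDist at h
      exact eq_of_dirDist_eq_zero hμ hν (by linarith) (by linarith)
    · rintro rfl
      simp [baDist, dirDist_self hμ]
  · unfold baDist
    linarith [dirDist_triangle hμ hν hρ, dirDist_triangle hρ hν hμ]
end
end

section
/- If μ, ν ∈ P₁(ℝ₊) have identical barycenters, then d⃗(μ,ν) = 2 · sup_{K ≥ 0} ( E_μ[(X−K)⁺] − E_ν[(X−K)⁺] ). -/
open MeasureTheory Set Filter Topology
open scoped NNReal ENNReal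

noncomputable section

/-! The function `|x - K| = 2 (x - K)⁺ - (x - K)` is convex and 1-Lipschitz, and with equal
barycenters its integrals differ by twice the call-price difference at `K`; this gives `≥`.
Conversely, a convex 1-Lipschitz `ψ` on `ℝ₊` is the limit of its piecewise-linear interpolants on the
grid `ℕ / n`, dominated since `|ψₙ x - ψ 0| ≤ x`. Each interpolant is a discrete Carr–Madan
combination `ψ 0 + a x + ∑ wᵢ (x - Kᵢ)⁺` whose weights `wᵢ` are slope increments, hence nonnegative
with total mass at most `2`; the barycenter condition kills the linear term, so the integrals of `ψₙ`
differ by at most twice the supremum of the call-price differences. -/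

def gridSlope (φ : ℝ → ℝ) (n i : ℕ) : ℝ := n * (φ (((i : ℝ) + 1) / n) - φ (i / n))

-- The interpolant of `φ` at the nodes `i / n`, `i ≤ n² + 1`, continued linearly beyond them.
def gridInterp (φ : ℝ → ℝ) (n : ℕ) (x : ℝ) : ℝ :=
  φ 0 + gridSlope φ n 0 * x + ∑ i ∈ Finset.range (n * n),
    (gridSlope φ n (i + 1) - gridSlope φ n i) * max (x - ((i : ℝ) + 1) / n) 0

lemma abs_sub_le_of_lipschitzOnWith_one {φ : ℝ → ℝ} {s : Set ℝ} (hφ : LipschitzOnWith 1 φ s)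
    {a b : ℝ} (ha : a ∈ s) (hb : b ∈ s) : |φ a - φ b| ≤ |a - b| := by
  simpa [Real.dist_eq] using hφ.dist_le_mul a ha b hb

lemma gridInterp_eq_of_le (φ : ℝ → ℝ) {n j : ℕ} (hn : 0 < n) (hj : j ≤ n * n) {x : ℝ}
    (hjx : (j : ℝ) / n ≤ x) (hxi : ∀ i, j ≤ i → i < n * n → x ≤ ((i : ℝ) + 1) / n) :
    gridInterp φ n x = φ (j / n) + gridSlope φ n j * (x - j / n) := by
  have hn' : (n : ℝ) ≠ 0 := by positivity
  have hvanish : ∀ i ∈ Finset.range (n * n), i ∉ Finset.range j →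
      (gridSlope φ n (i + 1) - gridSlope φ n i) * max (x - ((i : ℝ) + 1) / n) 0 = 0 := by
    intro i hi hij
    rw [Finset.mem_range] at hi hij
    rw [max_eq_right (sub_nonpos.2 (hxi i (not_lt.1 hij) hi)), mul_zero]
  -- left of `x` every call is in the money, and the sum telescopes
  have htelescope : ∀ i ∈ Finset.range j,
      (gridSlope φ n (i + 1) - gridSlope φ n i) * max (x - ((i : ℝ) + 1) / n) 0 =
        (gridSlope φ n (i + 1) * (x - ((i + 1 : ℕ) : ℝ) / n) - gridSlope φ n i * (x - i / n)) +
          (φ (((i + 1 : ℕ) : ℝ) / n) - φ (i / n)) := by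
    intro i hi
    have hi : ((i : ℝ) + 1) / n ≤ j / n := by
      gcongr; exact_mod_cast Finset.mem_range.1 hi
    rw [max_eq_left (by linarith)]
    simp only [gridSlope]
    push_cast
    field_simp
    ring
  rw [gridInterp, ← Finset.sum_subset (Finset.range_subset_range.2 hj) hvanish,
    Finset.sum_congr rfl htelescope, Finset.sum_add_distrib,
    Finset.sum_range_sub (fun i => gridSlope φ n i * (x - i / n)),
    Finset.sum_range_sub (fun i => φ (i / n))]
  simp only [Nat.cast_zero, zero_div, sub_zero]
  ring

lemma abs_gridSlope_le {φ : ℝ → ℝ} (hφ : LipschitzOnWith 1 φ (Ici 0)) (n i : ℕ) :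
    |gridSlope φ n i| ≤ 1 := by
  rcases Nat.eq_zero_or_pos n with rfl | hn
  · simp [gridSlope]
  have hn' : (0 : ℝ) < n := by exact_mod_cast hn
  calc |gridSlope φ n i| = n * |φ (((i : ℝ) + 1) / n) - φ (i / n)| := by
        rw [gridSlope, abs_mul, abs_of_pos hn']
    _ ≤ n * |((i : ℝ) + 1) / n - i / n| :=
        mul_le_mul_of_nonneg_left (abs_sub_le_of_lipschitzOnWith_one hφ
          (by simp only [mem_Ici]; positivity) (by simp only [mem_Ici]; positivity)) hn'.le
    _ = 1 := by
        rw [← sub_div, add_sub_cancel_left, abs_of_pos (by positivity)]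
        field_simp

lemma exists_gridInterp_eq {φ : ℝ → ℝ} (hφ : LipschitzOnWith 1 φ (Ici 0)) {n : ℕ} (hn : 0 < n)
    {x : ℝ} (hx : 0 ≤ x) :
    ∃ t s : ℝ, 0 ≤ t ∧ t ≤ x ∧ (x < n → x - t < 1 / n) ∧ |s| ≤ 1 ∧
      gridInterp φ n x = φ t + s * (x - t) := by
  have hn' : (0 : ℝ) < n := by exact_mod_cast hn
  set k := ⌊x * n⌋₊
  have hk : (k : ℝ) / n ≤ x := by
    rw [div_le_iff₀ hn']; exact Nat.floor_le (by positivity)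
  have hk' : x < ((k : ℝ) + 1) / n := by
    rw [lt_div_iff₀ hn']; exact Nat.lt_floor_add_one _
  have hk_of_lt : x < n → k < n * n := fun hxn => by
    rw [Nat.floor_lt (by positivity)]
    push_cast
    nlinarith
  set j := min k (n * n)
  have hj_of_lt : j < n * n → j = k := fun h =>
    min_eq_left ((min_lt_iff.1 h).resolve_right (lt_irrefl _)).le
  have hjx : (j : ℝ) / n ≤ x := le_trans (by gcongr; exact min_le_left _ _) hk
  refine ⟨j / n, gridSlope φ n j, by positivity, hjx, fun hxn => ?_, abs_gridSlope_le hφ n j,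
    gridInterp_eq_of_le φ hn (min_le_right _ _) hjx fun i hji hi => ?_⟩
  · rw [show j = k from min_eq_left (hk_of_lt hxn).le]
    linarith [add_div (k : ℝ) 1 n]
  · rw [← hj_of_lt (hji.trans_lt hi)] at hk'
    exact hk'.le.trans (by gcongr)

lemma abs_gridInterp_sub_apply_zero_le {φ : ℝ → ℝ} (hφ : LipschitzOnWith 1 φ (Ici 0)) (n : ℕ)
    {x : ℝ} (hx : 0 ≤ x) : |gridInterp φ n x - φ 0| ≤ x := by
  rcases Nat.eq_zero_or_pos n with rfl | hn
  · simpa [gridInterp, gridSlope] using hx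
  obtain ⟨t, s, ht0, htx, -, hs, h⟩ := exists_gridInterp_eq hφ hn hx
  calc |gridInterp φ n x - φ 0| ≤ |φ t - φ 0| + |s| * |x - t| := by
        rw [h, ← abs_mul, add_sub_right_comm]; exact abs_add_le _ _
    _ ≤ |t - 0| + 1 * |x - t| :=
        add_le_add (abs_sub_le_of_lipschitzOnWith_one hφ ht0 self_mem_Ici)
          (mul_le_mul_of_nonneg_right hs (abs_nonneg _))
    _ = x := by rw [sub_zero, abs_of_nonneg ht0, abs_of_nonneg (sub_nonneg.2 htx)]; ring

lemma abs_gridInterp_sub_le {φ : ℝ → ℝ} (hφ : LipschitzOnWith 1 φ (Ici 0)) {n : ℕ} (hn : 0 < n)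
    {x : ℝ} (hx : 0 ≤ x) (hxn : x < n) : |gridInterp φ n x - φ x| ≤ 2 / n := by
  obtain ⟨t, s, ht0, htx, hxt, hs, h⟩ := exists_gridInterp_eq hφ hn hx
  have hxt' : |x - t| ≤ 1 / n := by rw [abs_of_nonneg (sub_nonneg.2 htx)]; exact (hxt hxn).le
  calc |gridInterp φ n x - φ x| ≤ |φ t - φ x| + |s| * |x - t| := by
        rw [h, ← abs_mul, add_sub_right_comm]; exact abs_add_le _ _
    _ ≤ |x - t| + 1 * |x - t| := by
        rw [abs_sub_comm x]
        exact add_le_add (abs_sub_le_of_lipschitzOnWith_one hφ ht0 hx)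
          (mul_le_mul_of_nonneg_right hs (abs_nonneg _))
    _ ≤ 2 / n := by linarith [add_div (1 : ℝ) 1 n]

lemma tendsto_gridInterp {φ : ℝ → ℝ} (hφ : LipschitzOnWith 1 φ (Ici 0)) {x : ℝ} (hx : 0 ≤ x) :
    Tendsto (fun n => gridInterp φ n x) atTop (𝓝 (φ x)) := by
  refine tendsto_iff_dist_tendsto_zero.2 <| squeeze_zero' (Eventually.of_forall fun _ => dist_nonneg)
    ?_ (tendsto_const_div_atTop_nhds_zero_nat 2)
  filter_upwards [eventually_gt_atTop ⌈x⌉₊] with n hn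
  exact abs_gridInterp_sub_le hφ (by omega) hx (Nat.lt_of_ceil_lt hn)

lemma continuous_gridInterp (φ : ℝ → ℝ) (n : ℕ) : Continuous (gridInterp φ n) := by
  unfold gridInterp
  fun_prop

lemma tendsto_integral_gridInterp {φ : ℝ → ℝ} (hφ : LipschitzOnWith 1 φ (Ici 0))
    {μ : Measure ℝ} [IsFiniteMeasure μ] (hpos : ∀ᵐ x ∂μ, 0 ≤ x) (hint : Integrable id μ) :
    Tendsto (fun n => ∫ x, gridInterp φ n x ∂μ) atTop (𝓝 (∫ x, φ x ∂μ)) := by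
  refine tendsto_integral_of_dominated_convergence (fun x => |φ 0| + x)
    (fun n => (continuous_gridInterp φ n).aestronglyMeasurable) ((integrable_const _).add hint)
    (fun n => ?_) (hpos.mono fun x hx => tendsto_gridInterp hφ hx)
  filter_upwards [hpos] with x hx
  have := abs_gridInterp_sub_apply_zero_le hφ n hx
  rw [Real.norm_eq_abs]
  linarith [abs_sub_abs_le_abs_sub (gridInterp φ n x) (φ 0)]

lemma monotone_gridSlope {φ : ℝ → ℝ} (hφ : ConvexOn ℝ (Ici 0) φ) (n : ℕ) :
    Monotone (gridSlope φ n) := by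
  refine monotone_nat_of_le_succ fun i => ?_
  rcases Nat.eq_zero_or_pos n with rfl | hn
  · simp [gridSlope]
  have hn' : (0 : ℝ) < n := by exact_mod_cast hn
  have hslope := hφ.slope_mono_adjacent (x := i / n) (y := ((i : ℝ) + 1) / n)
    (z := ((i : ℝ) + 1 + 1) / n) (by simp only [mem_Ici]; positivity)
    (by simp only [mem_Ici]; positivity) (by gcongr; linarith) (by gcongr; linarith)
  rw [← sub_div, ← sub_div, add_sub_cancel_left, add_sub_cancel_left, div_div_eq_mul_div,
    div_div_eq_mul_div, div_one, div_one] at hslope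
  simp only [gridSlope]
  push_cast
  linarith

def callPrice (μ : Measure ℝ) (K : ℝ) : ℝ := ∫ x, max (x - K) 0 ∂μ

lemma callPrice_nonneg (μ : Measure ℝ) (K : ℝ) : 0 ≤ callPrice μ K :=
  integral_nonneg fun _ => le_max_right _ _

section CallPrice

variable {μ : Measure ℝ}

lemma callPrice_zero (hpos : ∀ᵐ x ∂μ, 0 ≤ x) : callPrice μ 0 = ∫ x, x ∂μ :=
  integral_congr_ae <| hpos.mono fun x hx => by simp [hx]

lemma integrable_max_sub_zero [IsFiniteMeasure μ] (hint : Integrable id μ) (K : ℝ) :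
    Integrable (fun x => max (x - K) 0) μ :=
  (hint.sub (integrable_const K)).pos_part

lemma callPrice_le_integral [IsFiniteMeasure μ] (hpos : ∀ᵐ x ∂μ, 0 ≤ x)
    (hint : Integrable id μ) {K : ℝ} (hK : 0 ≤ K) : callPrice μ K ≤ ∫ x, x ∂μ :=
  integral_mono_ae (integrable_max_sub_zero hint K) hint <|
    hpos.mono fun x hx => max_le (by linarith) hx

lemma integral_dist_eq_two_mul_callPrice [IsProbabilityMeasure μ] (hint : Integrable id μ)
    (K : ℝ) : ∫ x, dist x K ∂μ = 2 * callPrice μ K - (∫ x, x ∂μ - K) := by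
  have hdist : ∀ x : ℝ, dist x K = 2 * max (x - K) 0 - (x - K) := fun x => by
    rw [Real.dist_eq]
    rcases le_total (x - K) 0 with h | h
    · rw [max_eq_right h, abs_of_nonpos h]; ring
    · rw [max_eq_left h, abs_of_nonneg h]; ring
  have hint' : Integrable (fun x : ℝ => x) μ := hint
  have hshift : Integrable (fun x : ℝ => x - K) μ := hint'.sub (integrable_const K)
  simp_rw [hdist]
  rw [integral_sub ((integrable_max_sub_zero hint K).const_mul 2) hshift,
    integral_const_mul, integral_sub hint' (integrable_const K)]
  simp [callPrice]

lemma integral_gridInterp [IsProbabilityMeasure μ] (hint : Integrable id μ) (φ : ℝ → ℝ) (n : ℕ) :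
    ∫ x, gridInterp φ n x ∂μ = φ 0 + gridSlope φ n 0 * ∫ x, x ∂μ +
      ∑ i ∈ Finset.range (n * n),
        (gridSlope φ n (i + 1) - gridSlope φ n i) * callPrice μ (((i : ℝ) + 1) / n) := by
  have hcalls : ∀ i ∈ Finset.range (n * n), Integrable (fun x =>
      (gridSlope φ n (i + 1) - gridSlope φ n i) * max (x - ((i : ℝ) + 1) / n) 0) μ :=
    fun i _ => (integrable_max_sub_zero hint _).const_mul _
  have hint' : Integrable (fun x : ℝ => x) μ := hint
  have haffine : Integrable (fun x => φ 0 + gridSlope φ n 0 * x) μ :=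
    (integrable_const _).add (hint'.const_mul _)
  unfold gridInterp
  rw [integral_add haffine (integrable_finsetSum _ hcalls),
    integral_add (integrable_const _) (hint'.const_mul _), integral_finsetSum _ hcalls,
    integral_const, integral_const_mul]
  simp [callPrice, integral_const_mul]

end CallPrice

section Barycenter

variable {μ ν : Measure ℝ} [IsProbabilityMeasure μ] [IsProbabilityMeasure ν]

lemma two_mul_callPrice_sub_eq (hμ : Integrable id μ) (hν : Integrable id ν)
    (hbar : ∫ x, x ∂μ = ∫ x, x ∂ν) (K : ℝ) :
    2 * (callPrice μ K - callPrice ν K) = ∫ x, dist x K ∂μ - ∫ x, dist x K ∂ν := by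
  rw [integral_dist_eq_two_mul_callPrice hμ, integral_dist_eq_two_mul_callPrice hν, hbar]
  ring

lemma integral_gridInterp_sub_le (hμ : Integrable id μ) (hν : Integrable id ν)
    (hbar : ∫ x, x ∂μ = ∫ x, x ∂ν) {φ : ℝ → ℝ} (hc : ConvexOn ℝ (Ici 0) φ)
    (hφ : LipschitzOnWith 1 φ (Ici 0)) {s : ℝ} (hs0 : 0 ≤ s)
    (hs : ∀ K ≥ 0, callPrice μ K - callPrice ν K ≤ s) (n : ℕ) :
    ∫ x, gridInterp φ n x ∂μ - ∫ x, gridInterp φ n x ∂ν ≤ 2 * s := by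
  have hslopes : gridSlope φ n (n * n) - gridSlope φ n 0 ≤ 2 := by
    linarith [(abs_le.1 (abs_gridSlope_le hφ n (n * n))).2, (abs_le.1 (abs_gridSlope_le hφ n 0)).1]
  rw [integral_gridInterp hμ, integral_gridInterp hν, hbar]
  calc _ = ∑ i ∈ Finset.range (n * n), (gridSlope φ n (i + 1) - gridSlope φ n i) *
        (callPrice μ (((i : ℝ) + 1) / n) - callPrice ν (((i : ℝ) + 1) / n)) := by
        simp only [mul_sub, Finset.sum_sub_distrib]
        ring
    _ ≤ ∑ i ∈ Finset.range (n * n), (gridSlope φ n (i + 1) - gridSlope φ n i) * s :=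
        Finset.sum_le_sum fun i _ => mul_le_mul_of_nonneg_left (hs _ (by positivity))
          (sub_nonneg.2 (monotone_gridSlope hc n (Nat.le_succ i)))
    _ = (gridSlope φ n (n * n) - gridSlope φ n 0) * s := by
        rw [← Finset.sum_mul, Finset.sum_range_sub]
    _ ≤ 2 * s := mul_le_mul_of_nonneg_right hslopes hs0

end Barycenter

theorem integral_sub_le_two_mul_of_callPrice_sub_le {μ ν : Measure ℝ} (hμ : IsP1 μ) (hν : IsP1 ν)
    (hbar : ∫ x, x ∂μ = ∫ x, x ∂ν) {φ : ℝ → ℝ} (hc : ConvexOn ℝ (Ici 0) φ)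
    (hφ : LipschitzOnWith 1 φ (Ici 0)) {s : ℝ}
    (hs : ∀ K ≥ 0, callPrice μ K - callPrice ν K ≤ s) :
    ∫ x, φ x ∂μ - ∫ x, φ x ∂ν ≤ 2 * s := by
  obtain ⟨_, hμpos, hμint⟩ := hμ
  obtain ⟨_, hνpos, hνint⟩ := hν
  have hs0 : 0 ≤ s := by
    simpa [callPrice_zero hμpos, callPrice_zero hνpos, hbar] using hs 0 le_rfl
  exact le_of_tendsto'
    ((tendsto_integral_gridInterp hφ hμpos hμint).sub (tendsto_integral_gridInterp hφ hνpos hνint))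
    (integral_gridInterp_sub_le hμint hνint hbar hc hφ hs0 hs)

/-- with identical barycenters, the directed distance is twice the
maximal call-price discrepancy. -/
theorem dirDist_eq_two_mul_sup_call (μ ν : Measure ℝ) (hμ : IsP1 μ) (hν : IsP1 ν)
    (hbar : ∫ x, x ∂μ = ∫ x, x ∂ν) :
    dirDist μ ν =
      2 * sSup {r : ℝ | ∃ K ≥ (0:ℝ),
        r = ∫ x, max (x - K) 0 ∂μ - ∫ x, max (x - K) 0 ∂ν} := by
  have := hμ.1
  have := hν.1
  set T := {r : ℝ | ∃ K ≥ (0:ℝ), r = ∫ x, max (x - K) 0 ∂μ - ∫ x, max (x - K) 0 ∂ν}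
  set D := {r : ℝ | ∃ ψ : ℝ → ℝ, ConvexOn ℝ (Ici (0:ℝ)) ψ ∧
    LipschitzOnWith 1 ψ (Ici (0:ℝ)) ∧ r = ∫ x, ψ x ∂μ - ∫ x, ψ x ∂ν}
  have hTne : T.Nonempty := ⟨_, 0, le_rfl, rfl⟩
  have hTbdd : BddAbove T := ⟨∫ x, x ∂μ, by
    rintro _ ⟨K, hK, rfl⟩
    exact (sub_le_self _ (callPrice_nonneg ν K)).trans (callPrice_le_integral hμ.2.1 hμ.2.2 hK)⟩
  have hTD : ∀ r ∈ T, 2 * r ∈ D := by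
    rintro _ ⟨K, -, rfl⟩
    exact ⟨(dist · K), convexOn_dist K (convex_Ici 0), (LipschitzWith.dist_left K).lipschitzOnWith,
      two_mul_callPrice_sub_eq hμ.2.2 hν.2.2 hbar K⟩
  have hD : ∀ r ∈ D, r ≤ 2 * sSup T := by
    rintro _ ⟨ψ, hc, hψ, rfl⟩
    exact integral_sub_le_two_mul_of_callPrice_sub_le hμ hν hbar hc hψ
      fun K hK => le_csSup hTbdd ⟨K, hK, rfl⟩
  refine le_antisymm (csSup_le (hTne.image (2 * ·) |>.mono ?_) hD) ?_
  · rintro _ ⟨r, hr, rfl⟩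
    exact hTD r hr
  rw [← le_div_iff₀' two_pos]
  exact csSup_le hTne fun r hr => (le_div_iff₀' two_pos).2 (le_csSup ⟨_, hD⟩ (hTD r hr))
end
end

section
/- There exist sequences (μₙ), (νₙ) of probability measures with finite first moment such that d(μₙ,νₙ) → 0 while W₁(μₙ,νₙ) = 1 for every n. In particular, the bid–ask distance d and W₁ induce distinct topologies on P₁. -/
open MeasureTheory Set Filter Topology
open scoped NNReal ENNReal

noncomputable section

/-- Kantorovich–Rubinstein form of the 1-Wasserstein distance. -/
def W1 (μ ν : Measure ℝ) : ℝ :=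
  sSup {r : ℝ | ∃ φ : ℝ → ℝ, LipschitzOnWith 1 φ (Ici (0:ℝ)) ∧
    r = ∫ x, φ x ∂μ - ∫ x, φ x ∂ν}

/-! Both measures live on the odd points `x = 1, 3, …, 2N - 1`: `μ` puts mass `1/N` at `x`, `ν`
splits it between `x ± 1`. Hence `∫ f dν - ∫ f dμ` is the average over these points of the discrete
half-Laplacian `(f (x - 1) + f (x + 1)) / 2 - f x`. It is nonnegative for convex `f`, so
`d⃗(μ, ν) = 0`, and at most `1/N` for convex 1-Lipschitz `f`, so `d⃗(ν, μ) ≤ 1/N`. The distance to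
the even integers is 1-Lipschitz with half-Laplacian `-1` at every odd point, so `W₁(μ, ν) = 1`. -/

section Empirical

variable {ι : Type*}

def empirical (s : Finset ι) (p : ι → ℝ) : Measure ℝ :=
  (s.card : ℝ≥0)⁻¹ • ∑ i ∈ s, Measure.dirac (p i)

theorem integrable_empirical (s : Finset ι) (p : ι → ℝ) (f : ℝ → ℝ) :
    Integrable f (empirical s p) :=
  (integrable_finsetSum_measure.2 fun _ _ => integrable_dirac enorm_lt_top).smul_measure_nnreal

theorem integral_empirical (s : Finset ι) (p : ι → ℝ) (f : ℝ → ℝ) :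
    ∫ x, f x ∂empirical s p = (s.card : ℝ)⁻¹ * ∑ i ∈ s, f (p i) := by
  rw [empirical, integral_smul_nnreal_measure,
    integral_finsetSum_measure fun _ _ => integrable_dirac enorm_lt_top]
  simp [integral_dirac, NNReal.smul_def]

theorem isP1_empirical {s : Finset ι} (hs : s.Nonempty) {p : ι → ℝ} (hp : ∀ i ∈ s, 0 ≤ p i) :
    IsP1 (empirical s p) := by
  refine ⟨⟨?_⟩, Measure.ae_smul_measure (ae_finsetSum_measure_iff.2 fun i hi => ?_) _,
    integrable_empirical s p id⟩
  · have hcard : (s.card : ℝ≥0) ≠ 0 := by simpa using hs.ne_empty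
    simp only [empirical, ENNReal.smul_def, ENNReal.coe_inv hcard, ENNReal.coe_natCast,
      Measure.smul_apply, Measure.coe_finsetSum, Finset.sum_apply, measure_univ, Finset.sum_const,
      nsmul_eq_mul, mul_one, smul_eq_mul]
    exact ENNReal.inv_mul_cancel (by exact_mod_cast hcard) (ENNReal.natCast_ne_top _)
  · exact (ae_dirac_iff measurableSet_Ici).2 (hp i hi)

end Empirical

def halfLaplacian (f : ℝ → ℝ) (x : ℝ) : ℝ := (f (x - 1) + f (x + 1)) / 2 - f x

theorem integral_empirical_rademacher_sub {ι : Type*} [DecidableEq ι] (s : Finset ι)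
    (p : ι → ℝ) (f : ℝ → ℝ) :
    ∫ x, f x ∂empirical (s ×ˢ {-1, 1}) (fun q => p q.1 + q.2) - ∫ x, f x ∂empirical s p =
      (s.card : ℝ)⁻¹ * ∑ i ∈ s, halfLaplacian f (p i) := by
  have hsign : (-1 : ℝ) ≠ 1 := by norm_num
  rw [integral_empirical, integral_empirical, Finset.sum_product, Finset.card_product,
    Finset.card_pair hsign, Finset.mul_sum, Finset.mul_sum, Finset.mul_sum, ← Finset.sum_sub_distrib]
  refine Finset.sum_congr rfl fun i _ => ?_
  rw [Finset.sum_pair hsign, halfLaplacian, ← sub_eq_add_neg]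
  push_cast
  ring

theorem ConvexOn.halfLaplacian_nonneg {ψ : ℝ → ℝ} (hψ : ConvexOn ℝ (Ici 0) ψ) {x : ℝ}
    (hx : 1 ≤ x) : 0 ≤ halfLaplacian ψ x := by
  have h := hψ.2 (x := x - 1) (y := x + 1) (mem_Ici.2 (by linarith)) (mem_Ici.2 (by linarith))
    (by norm_num : (0 : ℝ) ≤ 1 / 2) (by norm_num : (0 : ℝ) ≤ 1 / 2) (by norm_num)
  simp only [smul_eq_mul] at h
  rw [show 1 / 2 * (x - 1) + 1 / 2 * (x + 1) = x by ring] at h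
  rw [halfLaplacian]
  linarith

theorem LipschitzOnWith.neg_one_le_halfLaplacian {φ : ℝ → ℝ} (hφ : LipschitzOnWith 1 φ (Ici 0))
    {x : ℝ} (hx : 1 ≤ x) : -1 ≤ halfLaplacian φ x := by
  have hx0 : x ∈ Ici (0 : ℝ) := mem_Ici.2 (by linarith)
  have hleft := hφ.dist_le_mul x hx0 (x - 1) (mem_Ici.2 (by linarith))
  have hright := hφ.dist_le_mul x hx0 (x + 1) (mem_Ici.2 (by linarith))
  simp only [Real.dist_eq, NNReal.coe_one, one_mul, sub_sub_cancel, sub_add_cancel_left,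
    abs_neg, abs_one] at hleft hright
  rw [halfLaplacian]
  linarith [(abs_le.1 hleft).2, (abs_le.1 hright).2]

/-- Adjacent terms telescope into differences of slopes, which a 1-Lipschitz function keeps
in `[-1, 1]`; convexity lets the even-point terms be added in. -/
theorem sum_halfLaplacian_odd_le_one {ψ : ℝ → ℝ} (hc : ConvexOn ℝ (Ici 0) ψ)
    (hl : LipschitzOnWith 1 ψ (Ici 0)) (N : ℕ) :
    ∑ k ∈ Finset.range N, halfLaplacian ψ (2 * k + 1) ≤ 1 := by
  set slope : ℕ → ℝ := fun k => (ψ (2 * k + 1) - ψ (2 * k)) / 2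
  have hslope : ∀ k, |slope k| ≤ 1 / 2 := by
    intro k
    have h := hl.dist_le_mul (2 * k + 1) (mem_Ici.2 (by positivity)) (2 * k)
      (mem_Ici.2 (by positivity))
    simp only [Real.dist_eq, NNReal.coe_one, one_mul, add_sub_cancel_left, abs_one] at h
    simp only [slope, abs_div, abs_two]
    linarith
  calc ∑ k ∈ Finset.range N, halfLaplacian ψ (2 * k + 1)
      ≤ ∑ k ∈ Finset.range N, (halfLaplacian ψ (2 * k + 1) + halfLaplacian ψ (2 * k + 2)) :=
        Finset.sum_le_sum fun k _ =>
          le_add_of_nonneg_right (hc.halfLaplacian_nonneg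
            (le_add_of_nonneg_of_le (by positivity : (0 : ℝ) ≤ 2 * k) one_le_two))
    _ = ∑ k ∈ Finset.range N, (slope (k + 1) - slope k) := by
        refine Finset.sum_congr rfl fun k _ => ?_
        simp only [halfLaplacian, slope]
        push_cast
        ring_nf
    _ = slope N - slope 0 := Finset.sum_range_sub slope N
    _ ≤ 1 := by linarith [(abs_le.1 (hslope N)).2, (abs_le.1 (hslope 0)).1]

def distToEven (x : ℝ) : ℝ := Metric.infDist x (range fun m : ℤ => 2 * (m : ℝ))

theorem distToEven_two_mul (m : ℤ) : distToEven (2 * m) = 0 :=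
  Metric.infDist_zero_of_mem (mem_range_self m)

theorem distToEven_two_mul_add_one (m : ℤ) : distToEven (2 * m + 1) = 1 := by
  refine le_antisymm ?_ ((Metric.le_infDist ⟨_, mem_range_self m⟩).2 ?_)
  · simpa [distToEven, Real.dist_eq] using Metric.infDist_le_dist_of_mem (x := 2 * (m : ℝ) + 1)
      (mem_range_self (f := fun m : ℤ => 2 * (m : ℝ)) m)
  · rintro _ ⟨j, rfl⟩
    have hodd : (1 : ℝ) ≤ |((2 * (m - j) + 1 : ℤ) : ℝ)| := by
      rw [← Int.cast_abs]
      exact_mod_cast Int.one_le_abs (by omega)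
    simpa [Real.dist_eq, show 2 * (m : ℝ) + 1 - 2 * j = 2 * (m - j) + 1 by ring] using hodd

theorem halfLaplacian_distToEven_odd (m : ℤ) : halfLaplacian distToEven (2 * m + 1) = -1 := by
  rw [halfLaplacian, add_sub_cancel_right, distToEven_two_mul,
    show 2 * (m : ℝ) + 1 + 1 = 2 * ((m + 1 : ℤ) : ℝ) by push_cast; ring,
    distToEven_two_mul, distToEven_two_mul_add_one]
  norm_num

theorem dirDist_mem_Icc {μ ν : Measure ℝ} {c : ℝ}
    (h : ∀ ψ : ℝ → ℝ, ConvexOn ℝ (Ici 0) ψ → LipschitzOnWith 1 ψ (Ici 0) →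
      ∫ x, ψ x ∂μ - ∫ x, ψ x ∂ν ≤ c) :
    dirDist μ ν ∈ Icc 0 c := by
  have hsSup (S : Set ℝ) (hzero : 0 ∈ S) (hle : c ∈ upperBounds S) : sSup S ∈ Icc 0 c :=
    ⟨le_csSup ⟨c, hle⟩ hzero, csSup_le ⟨0, hzero⟩ hle⟩
  refine hsSup _ ⟨fun _ => 0, convexOn_const 0 (convex_Ici 0),
    (LipschitzWith.const' (0 : ℝ)).lipschitzOnWith, by simp⟩ ?_
  rintro _ ⟨ψ, hc, hl, rfl⟩
  exact h ψ hc hl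

/-- The paper's `μₙ` (uniform on consecutive even integers), shifted to the odd integers so that its
Rademacher smoothing stays on `ℝ₊`. -/
def oddUniform (N : ℕ) : Measure ℝ := empirical (Finset.range N) fun k => 2 * (k : ℝ) + 1

def oddUniformSmoothed (N : ℕ) : Measure ℝ :=
  empirical (Finset.range N ×ˢ {-1, 1}) fun q => 2 * (q.1 : ℝ) + 1 + q.2

theorem integral_oddUniformSmoothed_sub (N : ℕ) (f : ℝ → ℝ) :
    ∫ x, f x ∂oddUniformSmoothed N - ∫ x, f x ∂oddUniform N =
      (N : ℝ)⁻¹ * ∑ k ∈ Finset.range N, halfLaplacian f (2 * k + 1) := by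
  simpa [oddUniform, oddUniformSmoothed] using
    integral_empirical_rademacher_sub (Finset.range N) (fun k => 2 * (k : ℝ) + 1) f

theorem isP1_oddUniform {N : ℕ} (hN : 0 < N) : IsP1 (oddUniform N) :=
  isP1_empirical (by simpa using hN.ne') fun k _ => by positivity

theorem isP1_oddUniformSmoothed {N : ℕ} (hN : 0 < N) : IsP1 (oddUniformSmoothed N) := by
  refine isP1_empirical (by simp [hN.ne']) ?_
  simp only [Finset.mem_product, Finset.mem_insert, Finset.mem_singleton, and_imp, Prod.forall]
  rintro k _ _ (rfl | rfl) <;> linarith [(Nat.cast_nonneg k : (0 : ℝ) ≤ k)]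

theorem W1_oddUniform {N : ℕ} (hN : 0 < N) : W1 (oddUniform N) (oddUniformSmoothed N) = 1 := by
  have hN' : (N : ℝ) ≠ 0 := by exact_mod_cast hN.ne'
  refine IsGreatest.csSup_eq ⟨⟨distToEven, (Metric.lipschitz_infDist_pt _).lipschitzOnWith, ?_⟩, ?_⟩
  · have hodd (k : ℕ) : halfLaplacian distToEven (2 * k + 1) = -1 := by
      exact_mod_cast halfLaplacian_distToEven_odd k
    rw [← neg_sub, integral_oddUniformSmoothed_sub]
    simp [hodd, hN']
  · rintro _ ⟨φ, hφ, rfl⟩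
    have hsum : -(N : ℝ) ≤ ∑ k ∈ Finset.range N, halfLaplacian φ (2 * k + 1) := by
      simpa using Finset.sum_le_sum fun k (_ : k ∈ Finset.range N) =>
        hφ.neg_one_le_halfLaplacian (le_add_of_nonneg_left (by positivity))
    rw [← neg_sub, integral_oddUniformSmoothed_sub, neg_le, le_inv_mul_iff₀ (by positivity)]
    linarith

theorem dirDist_oddUniform (N : ℕ) : dirDist (oddUniform N) (oddUniformSmoothed N) = 0 := by
  have h := dirDist_mem_Icc (μ := oddUniform N) (ν := oddUniformSmoothed N) (c := 0)
    fun ψ hc _ => by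
      rw [← neg_sub, integral_oddUniformSmoothed_sub, neg_nonpos]
      exact mul_nonneg (by positivity) (Finset.sum_nonneg fun k _ =>
        hc.halfLaplacian_nonneg (le_add_of_nonneg_left (by positivity)))
  exact le_antisymm h.2 h.1

theorem dirDist_oddUniformSmoothed_mem_Icc (N : ℕ) :
    dirDist (oddUniformSmoothed N) (oddUniform N) ∈ Icc 0 (N : ℝ)⁻¹ :=
  dirDist_mem_Icc fun ψ hc hl => by
    rw [integral_oddUniformSmoothed_sub]
    exact mul_le_of_le_one_right (by positivity) (sum_halfLaplacian_odd_le_one hc hl N)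

/-- `baDist` can vanish along a sequence while `W1` stays equal to 1;
in particular the two metrics induce distinct topologies. -/
theorem baDist_W1_distinct_topologies :
    ∃ μ ν : ℕ → Measure ℝ,
      (∀ n, IsP1 (μ n)) ∧ (∀ n, IsP1 (ν n)) ∧
      Tendsto (fun n => baDist (μ n) (ν n)) atTop (nhds 0) ∧
      ∀ n, W1 (μ n) (ν n) = 1 := by
  refine ⟨fun n => oddUniform (n + 1), fun n => oddUniformSmoothed (n + 1),
    fun n => isP1_oddUniform n.succ_pos, fun n => isP1_oddUniformSmoothed n.succ_pos, ?_,
    fun n => W1_oddUniform n.succ_pos⟩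
  have hbound (n : ℕ) : baDist (oddUniform (n + 1)) (oddUniformSmoothed (n + 1)) ∈
      Icc 0 (1 / ((n : ℝ) + 1)) := by
    have h := dirDist_oddUniformSmoothed_mem_Icc (n + 1)
    rw [baDist, dirDist_oddUniform]
    push_cast at h
    constructor <;> linarith [h.1, h.2, one_div ((n : ℝ) + 1)]
  exact squeeze_zero (fun n => (hbound n).1) (fun n => (hbound n).2)
    tendsto_one_div_add_atTop_nhds_zero_nat
end
end

section
/- Gradient estimate for uniformly close convex functions: let ψ : ℝ → ℝ be C¹ convex with M-Lipschitz derivative, and let φ : ℝ → ℝ be convex with sup_x |ψ(x) − φ(x)| ≤ ε. Then every subgradient γ ∈ ∂φ(x) satisfies |γ − ψ'(x)| ≤ 2√(Mε), uniformly in x. -/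
/-!
Since `ψ'` is `M`-Lipschitz, `t ↦ M t² / 2 - ψ t` has monotone derivative and is therefore convex,
so `ψ` lies below its tangent parabola: `ψ (x + t) ≤ ψ x + ψ' x * t + M t² / 2`. Chaining this
with the subgradient inequality for `φ` at `x` and with `|ψ - φ| ≤ ε` at `x` and `x + t` gives
`(γ - ψ' x) * t ≤ 2 ε + M t² / 2` for every `t`. A quadratic that is nonnegative everywhere has
nonpositive discriminant, i.e. `(γ - ψ' x)² ≤ 4 M ε`.
-/

open Set
open scoped NNReal

theorem sq_le_four_mul_mul_of_forall_mul_le_add_mul_sq {K : Type*} [Field K] [LinearOrder K]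
    [IsStrictOrderedRing K] {a b c : K} (h : ∀ t, a * t ≤ b + c * t ^ 2) : a ^ 2 ≤ 4 * b * c := by
  have := discrim_le_zero (a := c) (b := -a) (c := b) fun t ↦ by linarith [h t]
  rw [discrim] at this
  linarith

theorem ConvexOn.add_mul_sub_le_of_hasDerivAt {S : Set ℝ} {f : ℝ → ℝ} {f' x y : ℝ}
    (hf : ConvexOn ℝ S f) (hx : x ∈ S) (hy : y ∈ S) (hfd : HasDerivAt f f' x) :
    f x + f' * (y - x) ≤ f y := by
  rcases lt_trichotomy x y with hxy | rfl | hyx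
  · have := hf.le_slope_of_hasDerivAt hx hy hxy hfd
    rw [slope_def_field, le_div_iff₀ (sub_pos.2 hxy)] at this
    linarith
  · simp
  · have := hf.slope_le_of_hasDerivAt hy hx hyx hfd
    rw [slope_def_field, div_le_iff₀ (sub_pos.2 hyx)] at this
    linarith

private theorem hasDerivAt_half_mul_sq_sub {f : ℝ → ℝ} (c : ℝ) {t : ℝ}
    (hf : DifferentiableAt ℝ f t) :
    HasDerivAt (fun t ↦ c / 2 * t ^ 2 - f t) (c * t - deriv f t) t :=
  (((hasDerivAt_pow 2 t).const_mul (c / 2)).sub hf.hasDerivAt).congr_deriv (by push_cast; ring)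

theorem convexOn_univ_half_mul_sq_sub_of_lipschitzWith_deriv {f : ℝ → ℝ} {K : ℝ≥0}
    (hf : Differentiable ℝ f) (hlip : LipschitzWith K (deriv f)) :
    ConvexOn ℝ univ (fun t ↦ K / 2 * t ^ 2 - f t) := by
  refine Monotone.convexOn_univ_of_deriv (by fun_prop) fun s t hst ↦ ?_
  have := (abs_le.1 (hlip.dist_le_mul t s)).2
  rw [Real.dist_eq, abs_of_nonneg (sub_nonneg.2 hst)] at this
  rw [(hasDerivAt_half_mul_sq_sub _ (hf s)).deriv, (hasDerivAt_half_mul_sq_sub _ (hf t)).deriv]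
  linarith

theorem le_add_deriv_mul_sub_add_of_lipschitzWith_deriv {f : ℝ → ℝ} {K : ℝ≥0}
    (hf : Differentiable ℝ f) (hlip : LipschitzWith K (deriv f)) (x y : ℝ) :
    f y ≤ f x + deriv f x * (y - x) + K / 2 * (y - x) ^ 2 := by
  have htangent := (convexOn_univ_half_mul_sq_sub_of_lipschitzWith_deriv hf hlip)
    |>.add_mul_sub_le_of_hasDerivAt (mem_univ x) (mem_univ y) (hasDerivAt_half_mul_sq_sub _ (hf x))
  linear_combination htangent

theorem Real.sqrt_toNNReal_mul {r s : ℝ} (hs : 0 ≤ s) : √(r.toNNReal * s) = √(r * s) := by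
  rcases le_total 0 r with hr | hr
  · rw [Real.coe_toNNReal r hr]
  · rw [Real.toNNReal_of_nonpos hr, NNReal.coe_zero, zero_mul, Real.sqrt_zero,
      Real.sqrt_eq_zero_of_nonpos (mul_nonpos_of_nonpos_of_nonneg hr hs)]

theorem subgradient_close_of_uniformly_close_convex_general
    (ψ φ : ℝ → ℝ) (M ε : ℝ)
    (hψd : Differentiable ℝ ψ)
    (hlip : LipschitzWith (Real.toNNReal M) (deriv ψ))
    (hclose : ∀ x, |ψ x - φ x| ≤ ε)
    (x γ : ℝ) (hγ : ∀ y, φ x + γ * (y - x) ≤ φ y) :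
    |γ - deriv ψ x| ≤ 2 * Real.sqrt (M * ε) := by
  have hε : 0 ≤ ε := (abs_nonneg _).trans (hclose x)
  have hquadratic : ∀ t, (γ - deriv ψ x) * t ≤ 2 * ε + M.toNNReal / 2 * t ^ 2 := by
    intro t
    have hψ := le_add_deriv_mul_sub_add_of_lipschitzWith_deriv hψd hlip x (x + t)
    have hφ := hγ (x + t)
    have hx := abs_le.1 (hclose x)
    have hxt := abs_le.1 (hclose (x + t))
    simp only [add_sub_cancel_left] at hψ hφ
    linarith [hx.1, hxt.2]
  calc |γ - deriv ψ x|
      ≤ √(4 * (2 * ε) * (M.toNNReal / 2)) :=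
        Real.abs_le_sqrt (sq_le_four_mul_mul_of_forall_mul_le_add_mul_sq hquadratic)
    _ = 2 * √(M.toNNReal * ε) := by
        rw [show 4 * (2 * ε) * (M.toNNReal / 2) = 2 ^ 2 * (M.toNNReal * ε) by ring,
          Real.sqrt_mul (by norm_num), Real.sqrt_sq zero_le_two]
    _ = 2 * √(M * ε) := by rw [Real.sqrt_toNNReal_mul hε]

/-- gradient estimate for uniformly close convex functions. -/
theorem subgradient_close_of_uniformly_close_convex
    (ψ φ : ℝ → ℝ) (M ε : ℝ) (hM : 0 < M) (hε : 0 < ε)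
    (hψc : ConvexOn ℝ Set.univ ψ) (hψd : Differentiable ℝ ψ)
    (hlip : LipschitzWith (Real.toNNReal M) (deriv ψ))
    (hφ : ConvexOn ℝ Set.univ φ)
    (hclose : ∀ x, |ψ x - φ x| ≤ ε)
    (x γ : ℝ) (hγ : ∀ y, φ x + γ * (y - x) ≤ φ y) :
    |γ - deriv ψ x| ≤ 2 * Real.sqrt (M * ε) :=
  subgradient_close_of_uniformly_close_convex_general ψ φ M ε hψd hlip hclose x γ hγ
end

section
/- Digital option in a one-sided market: let μᵃ ∈ P₁(ℝ₊) be atomless with mean x₀, K > x₀, and L⋆ < K with ∫_{L⋆}^∞ (x−K) μᵃ(dx) = 0. Then (i) μ⋆ := μᵃ restricted to [0,L⋆] plus μᵃ([L⋆,∞)) δ_K satisfies δ_{x₀} ≼c μ⋆ ≼c μᵃ; (ii) the call-spread profile ψ_{L⋆}(x) = (x−L⋆)⁺/(K−L⋆) dominates the digital payoff 1_{x ≥ K}; and (iii) sup_{μ ≼c μᵃ} μ([K,∞)) = μᵃ(ψ_{L⋆}) = μᵃ([L⋆,∞)). -/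
open MeasureTheory Set Filter Topology
open scoped NNReal ENNReal

noncomputable section

/-!
The optimizer `μ⋆` keeps `μᵃ` below `L` and collapses its mass on `[L, ∞)` to an atom at `K`. The
critical-strike condition says that `K` is the conditional mean of `μᵃ` on `[L, ∞)`, so Jensen's
inequality on `[L, ∞)` gives `μ⋆ ≼c μᵃ`, and `μ⋆` keeps the mean `x₀`, whence `δ_{x₀} ≼c μ⋆`.
Conversely, the call spread `ψ_L` is convex and dominates the digital payoff, so every `μ ≼c μᵃ`
has `μ([K, ∞)) ≤ μ(ψ_L) ≤ μᵃ(ψ_L) = μᵃ([L, ∞)) = μ⋆([K, ∞))`.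
-/

namespace ConvexOn

variable {S : Set ℝ} {f : ℝ → ℝ} {m : ℝ}

lemma add_rightDeriv_mul_sub_le (hf : ConvexOn ℝ S f) (hm : m ∈ interior S) {x : ℝ}
    (hx : x ∈ S) : f m + derivWithin f (Ioi m) m * (x - m) ≤ f x := by
  rcases lt_trichotomy x m with hxm | rfl | hmx
  · have h := (hf.slope_le_leftDeriv_of_mem_interior hx hm hxm).trans
      (hf.leftDeriv_le_rightDeriv_of_mem_interior hm)
    rw [slope_def_field, div_le_iff₀ (sub_pos.2 hxm)] at h
    linarith
  · simp
  · have h := hf.rightDeriv_le_slope_of_mem_interior hm hx hmx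
    rw [slope_def_field, le_div_iff₀ (sub_pos.2 hmx)] at h
    linarith

lemma aestronglyMeasurable_of_ae_mem_Ici {a : ℝ} (hf : ConvexOn ℝ (Ici a) f) {μ : Measure ℝ}
    (hμ : ∀ᵐ x ∂μ, x ∈ Ici a) : AEStronglyMeasurable f μ := by
  rw [← Measure.restrict_eq_self_of_ae_mem hμ, ← Ioi_insert, insert_eq,
    aestronglyMeasurable_union_iff]
  refine ⟨(aestronglyMeasurable_const (b := f a)).congr ?_, ?_⟩
  · filter_upwards [ae_restrict_mem (measurableSet_singleton a)] with x hx
    rw [mem_singleton_iff.1 hx]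
  · refine ContinuousOn.aestronglyMeasurable ?_ measurableSet_Ioi
    simpa using hf.continuousOn_interior

lemma integrable_of_linGrowth (hf : ConvexOn ℝ (Ici 0) f) (hg : LinGrowth f) {μ : Measure ℝ}
    (hμ : IsP1 μ) : Integrable f μ := by
  obtain ⟨hprob, hpos, hid⟩ := hμ
  obtain ⟨C, hC⟩ := hg
  refine ((integrable_const C).add (hid.const_mul C)).mono'
    (hf.aestronglyMeasurable_of_ae_mem_Ici hpos) ?_
  filter_upwards [hpos] with x hx
  simpa [mul_add] using hC x hx

/-- Jensen's inequality on `[0, ∞)`. Unlike `ConvexOn.map_integral_le`, no continuity at `0` is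
needed: an interior barycenter has a subgradient, and a barycenter `0` forces `μ` to sit at `0`. -/
lemma measureReal_univ_mul_le_integral (hf : ConvexOn ℝ (Ici 0) f) {μ : Measure ℝ}
    [IsFiniteMeasure μ] (hpos : ∀ᵐ x ∂μ, 0 ≤ x) (hid : Integrable id μ) (hfi : Integrable f μ)
    (hm0 : 0 ≤ m) (hm : ∫ x, x ∂μ = μ.real univ * m) : μ.real univ * f m ≤ ∫ x, f x ∂μ := by
  rcases hm0.eq_or_lt with rfl | hm0
  · have h0 : (fun x => x) =ᵐ[μ] 0 :=
      (integral_eq_zero_iff_of_nonneg_ae hpos hid).1 (by simpa using hm)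
    have hf0 : f =ᵐ[μ] fun _ => f 0 := h0.fun_comp f
    simp [integral_congr_ae hf0]
  · have hm' : m ∈ interior (Ici 0) := by simpa using hm0
    set c := derivWithin f (Ioi m) m
    have hlin : Integrable (fun x => c * (x - m)) μ :=
      (hid.sub (integrable_const m)).const_mul c
    calc μ.real univ * f m = ∫ x, f m + c * (x - m) ∂μ := by
          rw [integral_add (integrable_const _) hlin, integral_const, integral_const_mul,
            integral_sub (f := fun x => x) hid (integrable_const m), hm, integral_const]
          simp
      _ ≤ ∫ x, f x ∂μ := integral_mono_ae ((integrable_const _).add hlin) hfi <| by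
          filter_upwards [hpos] with x hx using hf.add_rightDeriv_mul_sub_le hm' hx

end ConvexOn

lemma cvxOrder_dirac_integral {μ : Measure ℝ} (hμ : IsP1 μ) :
    CvxOrder (Measure.dirac (∫ x, x ∂μ)) μ := by
  intro ψ hψ hg
  have hψμ := hψ.integrable_of_linGrowth hg hμ
  obtain ⟨hprob, hpos, hid⟩ := hμ
  simpa [integral_dirac] using hψ.measureReal_univ_mul_le_integral hpos hid hψμ
    (integral_nonneg_of_ae hpos) (by simp)

section CallSpread

variable {L K : ℝ}

def callSpread (L K x : ℝ) : ℝ := max (x - L) 0 / (K - L)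

lemma convexOn_callSpread (hLK : L ≤ K) : ConvexOn ℝ univ (callSpread L K) := by
  have h : ConvexOn ℝ univ fun x : ℝ => max (x - L) 0 :=
    ((convexOn_id convex_univ).sub (concaveOn_const L convex_univ)).sup
      (convexOn_const 0 convex_univ)
  unfold callSpread
  simpa only [div_eq_inv_mul, smul_eq_mul] using h.smul (inv_nonneg.2 (sub_nonneg.2 hLK))

lemma linGrowth_callSpread : LinGrowth (callSpread L K) := by
  refine ⟨(1 + |L|) / |K - L|, fun x hx => ?_⟩
  have h : max (x - L) 0 ≤ (1 + |L|) * (1 + x) :=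
    max_le (by nlinarith [neg_abs_le L, abs_nonneg L]) (by positivity)
  rw [callSpread, abs_div, abs_of_nonneg (le_max_right _ _), div_mul_eq_mul_div]
  exact div_le_div_of_nonneg_right h (abs_nonneg _)

lemma indicator_Ici_le_callSpread (hLK : L < K) (x : ℝ) :
    (Ici K).indicator (fun _ => (1 : ℝ)) x ≤ callSpread L K x := by
  rw [callSpread, le_div_iff₀ (sub_pos.2 hLK)]
  by_cases hx : x ∈ Ici K
  · rw [indicator_of_mem hx, one_mul]
    exact le_max_of_le_left (sub_le_sub_right hx L)
  · rw [indicator_of_notMem hx, zero_mul]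
    exact le_max_right _ _

lemma measure_Ici_le_integral_callSpread {μ ν : Measure ℝ} (hμ : IsP1 μ) (hμν : CvxOrder μ ν)
    (hLK : L < K) : (μ (Ici K)).toReal ≤ ∫ x, callSpread L K x ∂ν := by
  have : IsProbabilityMeasure μ := hμ.1
  have hcvx := (convexOn_callSpread hLK.le).subset (subset_univ _) (convex_Ici 0)
  calc (μ (Ici K)).toReal = ∫ x, (Ici K).indicator (fun _ => (1 : ℝ)) x ∂μ := by
        simp [integral_indicator_const _ measurableSet_Ici, Measure.real]
    _ ≤ ∫ x, callSpread L K x ∂μ :=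
        integral_mono ((integrable_const 1).indicator measurableSet_Ici)
          (hcvx.integrable_of_linGrowth linGrowth_callSpread hμ) (indicator_Ici_le_callSpread hLK)
    _ ≤ ∫ x, callSpread L K x ∂ν := hμν _ hcvx linGrowth_callSpread

lemma setIntegral_id_eq_of_setIntegral_sub_eq_zero {μ : Measure ℝ} [IsFiniteMeasure μ] {s : Set ℝ}
    (hid : Integrable id μ) (h : ∫ x in s, (x - K) ∂μ = 0) :
    ∫ x in s, x ∂μ = μ.real s * K := by
  rw [integral_sub (f := fun x => x) hid.restrict (integrable_const K), setIntegral_const,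
    smul_eq_mul, sub_eq_zero] at h
  exact h

lemma integral_callSpread {μ : Measure ℝ} [IsFiniteMeasure μ] (hLK : L < K) (hid : Integrable id μ)
    (hcrit : ∫ x in Ici L, (x - K) ∂μ = 0) : ∫ x, callSpread L K x ∂μ = μ.real (Ici L) := by
  have hmax : (fun x => max (x - L) 0) = (Ici L).indicator fun x => x - L := by
    ext x
    by_cases hx : x ∈ Ici L
    · rw [indicator_of_mem hx, max_eq_left (sub_nonneg.2 hx)]
    · rw [indicator_of_notMem hx, max_eq_right (sub_nonpos.2 (not_le.1 hx).le)]
  have hKL := sub_pos.2 hLK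
  simp only [callSpread]
  rw [integral_div, hmax, integral_indicator measurableSet_Ici,
    integral_sub (f := fun x => x) hid.restrict (integrable_const L),
    setIntegral_id_eq_of_setIntegral_sub_eq_zero hid hcrit, setIntegral_const, smul_eq_mul]
  field_simp

end CallSpread

section DigitalOptimizer

variable {μ : Measure ℝ} {L K : ℝ}

lemma measure_Iic_add_measure_Ici [NullSingletonClass μ] : μ (Iic L) + μ (Ici L) = μ univ := by
  rw [← measure_congr Ioi_ae_eq_Ici, ← compl_Iic]
  exact measure_add_measure_compl measurableSet_Iic

lemma setIntegral_Iic_add_setIntegral_Ici [NullSingletonClass μ] {f : ℝ → ℝ}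
    (hf : Integrable f μ) : ∫ x in Iic L, f x ∂μ + ∫ x in Ici L, f x ∂μ = ∫ x, f x ∂μ := by
  rw [← setIntegral_congr_set Ioi_ae_eq_Ici, ← compl_Iic]
  exact integral_add_compl measurableSet_Iic hf

def digitalOptimizer (μ : Measure ℝ) (L K : ℝ) : Measure ℝ :=
  μ.restrict (Iic L) + μ (Ici L) • Measure.dirac K

lemma digitalOptimizer_Ici (hLK : L < K) : digitalOptimizer μ L K (Ici K) = μ (Ici L) := by
  have hdisj : Ici K ∩ Iic L = ∅ := Ici_inter_Iic.trans (Icc_eq_empty (not_le.2 hLK))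
  simp [digitalOptimizer, Measure.restrict_apply measurableSet_Ici, hdisj]

lemma integral_digitalOptimizer [IsFiniteMeasure μ] {f : ℝ → ℝ}
    (hf : Integrable f (μ.restrict (Iic L))) :
    ∫ x, f x ∂digitalOptimizer μ L K = ∫ x in Iic L, f x ∂μ + μ.real (Ici L) * f K := by
  rw [digitalOptimizer, integral_add_measure hf
    ((integrable_dirac enorm_lt_top).smul_measure (measure_ne_top _ _)),
    integral_smul_measure, integral_dirac]
  rfl

lemma isP1_digitalOptimizer [NullSingletonClass μ] (hμ : IsP1 μ) (hK : 0 ≤ K) :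
    IsP1 (digitalOptimizer μ L K) := by
  obtain ⟨hprob, hpos, hid⟩ := hμ
  refine ⟨⟨?_⟩, ?_, ?_⟩
  · simp [digitalOptimizer, measure_Iic_add_measure_Ici]
  · exact ae_add_measure_iff.2
      ⟨ae_restrict_of_ae hpos, Measure.ae_smul_measure (by simpa [ae_dirac_eq] using hK) _⟩
  · exact hid.restrict.add_measure
      ((integrable_dirac enorm_lt_top).smul_measure (measure_ne_top _ _))

lemma integral_id_digitalOptimizer [IsFiniteMeasure μ] [NullSingletonClass μ]
    (hid : Integrable id μ) (hcrit : ∫ x in Ici L, (x - K) ∂μ = 0) :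
    ∫ x, x ∂digitalOptimizer μ L K = ∫ x, x ∂μ := by
  rw [integral_digitalOptimizer (f := fun x => x) hid.restrict,
    ← setIntegral_id_eq_of_setIntegral_sub_eq_zero hid hcrit]
  exact setIntegral_Iic_add_setIntegral_Ici hid

lemma digitalOptimizer_cvxOrder [NullSingletonClass μ] (hμ : IsP1 μ) (hK : 0 ≤ K)
    (hcrit : ∫ x in Ici L, (x - K) ∂μ = 0) : CvxOrder (digitalOptimizer μ L K) μ := by
  intro ψ hψ hg
  have hψμ := hψ.integrable_of_linGrowth hg hμ
  obtain ⟨hprob, hpos, hid⟩ := hμ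
  -- `K` is the barycenter of `μ` on `[L, ∞)`
  have hjensen : μ.real (Ici L) * ψ K ≤ ∫ x in Ici L, ψ x ∂μ := by
    simpa using hψ.measureReal_univ_mul_le_integral (ae_restrict_of_ae hpos) hid.restrict
      hψμ.restrict hK (by simpa using setIntegral_id_eq_of_setIntegral_sub_eq_zero hid hcrit)
  rw [integral_digitalOptimizer hψμ.restrict, ← setIntegral_Iic_add_setIntegral_Ici (L := L) hψμ]
  gcongr

end DigitalOptimizer

theorem digital_one_sided_market_general (μa : Measure ℝ) (ha : IsP1 μa) [NullSingletonClass μa]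
    (x₀ K L : ℝ) (hmean : ∫ x, x ∂μa = x₀) (hK : x₀ < K)
    (hLK : L < K)
    (hcrit : ∫ x in Ici L, (x - K) ∂μa = 0) :
    (CvxOrder (Measure.dirac x₀)
        (μa.restrict (Iic L) + μa (Ici L) • Measure.dirac K) ∧
      CvxOrder (μa.restrict (Iic L) + μa (Ici L) • Measure.dirac K) μa) ∧
    (∀ x ≥ (0:ℝ), Set.indicator (Ici K) (fun _ => (1:ℝ)) x ≤ max (x - L) 0 / (K - L)) ∧
    sSup {r : ℝ | ∃ μ : Measure ℝ, IsP1 μ ∧ CvxOrder μ μa ∧ r = (μ (Ici K)).toReal}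
      = ∫ x, max (x - L) 0 / (K - L) ∂μa ∧
    ∫ x, max (x - L) 0 / (K - L) ∂μa = (μa (Ici L)).toReal := by
  have : IsProbabilityMeasure μa := ha.1
  have hK0 : 0 ≤ K := (hmean ▸ integral_nonneg_of_ae ha.2.1).trans hK.le
  have hν : IsP1 (digitalOptimizer μa L K) := isP1_digitalOptimizer ha hK0
  have hνμa : CvxOrder (digitalOptimizer μa L K) μa := digitalOptimizer_cvxOrder ha hK0 hcrit
  have hvalue : ∫ x, callSpread L K x ∂μa = μa.real (Ici L) := integral_callSpread hLK ha.2.2 hcrit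
  refine ⟨⟨?_, hνμa⟩, fun x _ => indicator_Ici_le_callSpread hLK x, ?_, hvalue⟩
  · rw [← hmean, ← integral_id_digitalOptimizer ha.2.2 hcrit]
    exact cvxOrder_dirac_integral hν
  · refine IsGreatest.csSup_eq ⟨⟨_, hν, hνμa, ?_⟩, ?_⟩
    · rw [digitalOptimizer_Ici hLK]
      exact hvalue
    · rintro _ ⟨μ, hμ, hμμa, rfl⟩
      exact measure_Ici_le_integral_callSpread hμ hμμa hLK

/-- digital option in a one-sided market. -/
theorem digital_one_sided_market (μa : Measure ℝ) (ha : IsP1 μa) [NullSingletonClass μa]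
    (x₀ K L : ℝ) (hmean : ∫ x, x ∂μa = x₀) (hK : x₀ < K)
    (hL0 : 0 ≤ L) (hLK : L < K)
    (hcrit : ∫ x in Ici L, (x - K) ∂μa = 0) :
    (CvxOrder (Measure.dirac x₀)
        (μa.restrict (Iic L) + μa (Ici L) • Measure.dirac K) ∧
      CvxOrder (μa.restrict (Iic L) + μa (Ici L) • Measure.dirac K) μa) ∧
    (∀ x ≥ (0:ℝ), Set.indicator (Ici K) (fun _ => (1:ℝ)) x ≤ max (x - L) 0 / (K - L)) ∧
    sSup {r : ℝ | ∃ μ : Measure ℝ, IsP1 μ ∧ CvxOrder μ μa ∧ r = (μ (Ici K)).toReal}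
      = ∫ x, max (x - L) 0 / (K - L) ∂μa ∧
    ∫ x, max (x - L) 0 / (K - L) ∂μa = (μa (Ici L)).toReal :=
  digital_one_sided_market_general μa ha x₀ K L hmean hK hLK hcrit
end
end
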